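/- arXiv:1905.07238 — 4 statements merged into one kernel-verified Lean document; each statement's English description precedes it below -/
import Mathlib

section
/- Let F be a field of characteristic p > 0 with an iterative derivation θ, and let L be an algebraic field extension of F (not necessarily separable). If θ_L and θ_L' are two iterative derivations on L that both extend θ (i.e. θ_L(algebraMap F L f) = PowerSeries.map (algebraMap F L) (θ f) = θ_L'(algebraMap F L f) for all f ∈ F), then θ_L = θ_L'. -/
/-- An *iterative derivation* on a commutative ring `R` is a ring homomorphism
`θ : R →+* R⟦T⟧` (here encoded as a function preserving `1`, `+`, `*`) such that
the coefficient of `T^0` in `θ r` is `r`, and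
`θ⁽ⁱ⁾(θ⁽ʲ⁾ r) = (i+j).choose i • θ⁽ⁱ⁺ʲ⁾ r` for all `i j`. -/
def IsIterativeDerivation {R : Type*} [CommRing R] (θ : R → PowerSeries R) : Prop :=
  θ 1 = 1 ∧ (∀ a b : R, θ (a + b) = θ a + θ b) ∧ (∀ a b : R, θ (a * b) = θ a * θ b) ∧
    (∀ r : R, PowerSeries.coeff (R := R) 0 (θ r) = r) ∧
    ∀ i j : ℕ, ∀ r : R,
      PowerSeries.coeff (R := R) i (θ (PowerSeries.coeff (R := R) j (θ r))) =
        (i + j).choose i • PowerSeries.coeff (R := R) (i + j) (θ r)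

theorem at_most_one_extension_algebraic
    {F L : Type*} [Field F] [Field L] [Algebra F L] [Algebra.IsAlgebraic F L]
    (p : ℕ) (hp : 0 < p) [CharP F p]
    (θ : F → PowerSeries F) (hθ : IsIterativeDerivation θ)
    (θL θL' : L → PowerSeries L)
    (hθL : IsIterativeDerivation θL) (hθL' : IsIterativeDerivation θL')
    (hext : ∀ f : F, θL (algebraMap F L f) = PowerSeries.map (algebraMap F L) (θ f))
    (hext' : ∀ f : F, θL' (algebraMap F L f) = PowerSeries.map (algebraMap F L) (θ f)) :
    θL = θL' := by
  classical
  obtain ⟨h1, hadd, hmul, h0, -⟩ := hθL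
  obtain ⟨h1', hadd', hmul', h0', -⟩ := hθL'
  haveI : NeZero p := ⟨hp.ne'⟩
  haveI hpf : Fact p.Prime := CharP.char_is_prime_of_pos F p
  have hprime : p.Prime := hpf.out
  haveI : CharP L p := charP_of_injective_algebraMap (algebraMap F L).injective p
  set S := separableClosure F L with hS
  -- coefficientwise equality on separable elements
  have key : ∀ n : ℕ, ∀ x ∈ S, PowerSeries.coeff (R := L) n (θL x) = PowerSeries.coeff (R := L) n (θL' x) := by
    intro n
    induction n using Nat.strong_induction_on with
    | _ n IH =>
    rcases Nat.eq_zero_or_pos n with rfl | hn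
    · intro x _; rw [h0, h0']
    set D : L → L := fun y => PowerSeries.coeff (R := L) n (θL y) - PowerSeries.coeff (R := L) n (θL' y)
      with hD
    suffices hsuff : ∀ x ∈ S, D x = 0 by
      intro x hx
      have := hsuff x hx
      rw [hD] at this
      exact sub_eq_zero.mp this
    have Dadd : ∀ a b : L, D (a + b) = D a + D b := by
      intro a b; simp only [hD, hadd, hadd', map_add]; ring
    have D0 : D 0 = 0 := by
      have h := Dadd 0 0
      rw [add_zero] at h
      exact (add_eq_right.mp h.symm)
    have D1 : D 1 = 0 := by simp [hD, h1, h1']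
    have Dalg : ∀ c : F, D (algebraMap F L c) = 0 := by
      intro c; simp [hD, hext, hext']
    have Dmul : ∀ a ∈ S, ∀ b ∈ S, D (a * b) = D a * b + a * D b := by
      intro a ha b hb
      have ea : PowerSeries.coeff (R := L) n (θL (a * b)) =
          ∑ k ∈ Finset.range (n + 1),
            PowerSeries.coeff (R := L) k (θL a) * PowerSeries.coeff (R := L) (n - k) (θL b) := by
        rw [hmul a b, PowerSeries.coeff_mul, Finset.Nat.sum_antidiagonal_eq_sum_range_succ_mk]
      have ea' : PowerSeries.coeff (R := L) n (θL' (a * b)) =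
          ∑ k ∈ Finset.range (n + 1),
            PowerSeries.coeff (R := L) k (θL' a) * PowerSeries.coeff (R := L) (n - k) (θL' b) := by
        rw [hmul' a b, PowerSeries.coeff_mul, Finset.Nat.sum_antidiagonal_eq_sum_range_succ_mk]
      have : D (a * b) = ∑ k ∈ Finset.range (n + 1),
          (PowerSeries.coeff (R := L) k (θL a) * PowerSeries.coeff (R := L) (n - k) (θL b) -
           PowerSeries.coeff (R := L) k (θL' a) * PowerSeries.coeff (R := L) (n - k) (θL' b)) := by
        rw [hD]; simp only [ea, ea', Finset.sum_sub_distrib]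
      rw [this]
      set g : ℕ → L := fun k =>
        PowerSeries.coeff (R := L) k (θL a) * PowerSeries.coeff (R := L) (n - k) (θL b) -
          PowerSeries.coeff (R := L) k (θL' a) * PowerSeries.coeff (R := L) (n - k) (θL' b) with hg
      have hsub : ({0, n} : Finset ℕ) ⊆ Finset.range (n + 1) := by
        intro k hk
        rcases Finset.mem_insert.mp hk with rfl | hk
        · exact Finset.mem_range.mpr (Nat.succ_pos n)
        · rw [Finset.mem_singleton.mp hk]; exact Finset.mem_range.mpr (Nat.lt_succ_self n)
      have hzero : ∀ k ∈ Finset.range (n + 1), k ∉ ({0, n} : Finset ℕ) → g k = 0 := by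
        intro k hkr hk
        simp only [Finset.mem_insert, Finset.mem_singleton, not_or] at hk
        obtain ⟨hk0, hkn⟩ := hk
        have hklt : k < n := lt_of_le_of_ne (Nat.lt_succ_iff.mp (Finset.mem_range.mp hkr)) hkn
        have hnk : n - k < n := Nat.sub_lt hn (Nat.pos_of_ne_zero hk0)
        rw [hg]
        simp only [IH k hklt a ha, IH (n - k) hnk b hb, sub_self]
      rw [← Finset.sum_subset hsub hzero, Finset.sum_pair (Ne.symm (Nat.pos_iff_ne_zero.mp hn))]
      rw [hg, hD]
      simp only [h0, h0', Nat.sub_zero, Nat.sub_self]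
      ring
    have Dpow : ∀ x ∈ S, ∀ k : ℕ, D (x ^ (k + 1)) = (k + 1 : ℕ) • (x ^ k * D x) := by
      intro x hx k
      induction k with
      | zero => simp
      | succ k ih =>
        have : x ^ (k + 2) = x * x ^ (k + 1) := by ring
        rw [this, Dmul x hx (x ^ (k + 1)) (pow_mem hx (k + 1)), ih]
        simp only [nsmul_eq_mul]
        push_cast
        ring
    have Dpoly : ∀ x ∈ S, ∀ f : Polynomial F,
        D (Polynomial.aeval x f) = Polynomial.aeval x (Polynomial.derivative f) * D x := by
      intro x hx f
      induction f using Polynomial.induction_on' with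
      | add f g hf hg =>
        rw [map_add, Dadd, hf, hg, map_add, map_add, add_mul]
      | monomial k a =>
        rw [Polynomial.aeval_monomial, Polynomial.derivative_monomial, Polynomial.aeval_monomial]
        rw [Dmul _ (IntermediateField.algebraMap_mem S a) _ (pow_mem hx k), Dalg, zero_mul,
          zero_add]
        cases k with
        | zero => simp [D1]
        | succ k =>
          rw [Dpow x hx k]
          simp only [Nat.add_sub_cancel, nsmul_eq_mul, map_mul, map_natCast]
          push_cast
          ring
    intro x hx
    have hsepx : (minpoly F x).Separable := mem_separableClosure_iff.mp hx
    have hint : IsIntegral F x := Algebra.IsIntegral.isIntegral x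
    have hmin : Polynomial.aeval x (minpoly F x) = 0 := minpoly.aeval F x
    have h2 := Dpoly x hx (minpoly F x)
    rw [hmin, D0] at h2
    have hne : Polynomial.aeval x (Polynomial.derivative (minpoly F x)) ≠ 0 := by
      obtain ⟨u, v, huv⟩ := hsepx
      intro hzero
      have h3 := congrArg (Polynomial.aeval x) huv
      simp only [map_add, map_mul, hmin, hzero, mul_zero, add_zero, map_one] at h3
      exact zero_ne_one h3
    rcases mul_eq_zero.mp h2.symm with h | h
    · exact absurd h hne
    · exact h
  have keyS : ∀ x ∈ S, θL x = θL' x := fun x hx => PowerSeries.ext fun n => key n x hx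
  have hpow : ∀ (x : L) (k : ℕ), θL (x ^ k) = θL x ^ k := by
    intro x k
    induction k with
    | zero => simpa using h1
    | succ k ih => rw [pow_succ, hmul, ih, pow_succ]
  have hpow' : ∀ (x : L) (k : ℕ), θL' (x ^ k) = θL' x ^ k := by
    intro x k
    induction k with
    | zero => simpa using h1'
    | succ k ih => rw [pow_succ, hmul', ih, pow_succ]
  funext x
  haveI : CharP S p := charP_of_injective_algebraMap (algebraMap F S).injective p
  obtain ⟨m, y, hy⟩ := IsPurelyInseparable.pow_mem S p x
  have hyx : θL (x ^ p ^ m) = θL' (x ^ p ^ m) := by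
    rw [← hy]
    exact keyS _ (y.2)
  haveI : CharP (PowerSeries L) p :=
    charP_of_injective_ringHom (f := PowerSeries.C (R := L))
      (fun a b h => by simpa using congrArg (PowerSeries.constantCoeff (R := L)) h) p
  have h3 : (θL x - θL' x) ^ p ^ m = 0 := by
    rw [sub_pow_char_pow, ← hpow, ← hpow', hyx, sub_self]
  have h4 : θL x - θL' x = 0 :=
    (pow_eq_zero_iff (pow_ne_zero m hp.ne')).mp h3
  exact sub_eq_zero.mp h4
end

section
/- Let F be a field of characteristic p > 0, let θ be an iterative derivation on F, and let d ≥ 1. Define θ̃ : F → F⟦T⟧ by θ̃(f) := Σ_k θ^{(k)}(f)·T^{k·p^d}, i.e. θ̃^{(n)}(f) = θ^{(k)}(f) if n = k·p^d, and θ̃^{(n)}(f) = 0 if p^d does not divide n. Then θ̃ is an iterative derivation on F. -/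
open Finset

/-- Lucas-type lemma: `choose (m * p^d) i` mod `p` is `choose m (i/p^d)` if `p^d ∣ i`,
else `0`. -/
lemma choose_mul_pow_cast {p : ℕ} (hp : p.Prime) (d m i : ℕ) :
    (((m * p ^ d).choose i : ZMod p)) =
      if p ^ d ∣ i then ((m.choose (i / p ^ d) : ZMod p)) else 0 := by
  haveI : Fact p.Prime := ⟨hp⟩
  have hqpos : 0 < p ^ d := pow_pos hp.pos d
  have h := Choose.choose_modEq_choose_mul_prod_range_choose (n := m * p ^ d) (k := i) (p := p) d
  have hcast : ((m * p ^ d).choose i : ZMod p) =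
      ((((m * p ^ d) / p ^ d).choose (i / p ^ d)) *
        ∏ l ∈ range d, ((m * p ^ d) / p ^ l % p).choose (i / p ^ l % p) : ℕ) := by
    have := (ZMod.intCast_eq_intCast_iff _ _ _).mpr h
    push_cast at this ⊢
    exact_mod_cast this
  rw [Nat.mul_div_cancel _ hqpos] at hcast
  have hdigit : ∀ u l, l < d → (u * p ^ d) / p ^ l % p = 0 := by
    intro u l hl
    rw [Nat.mul_div_assoc u (pow_dvd_pow p hl.le), Nat.pow_div hl.le hp.pos]
    exact Nat.mod_eq_zero_of_dvd (Dvd.dvd.mul_left (dvd_pow_self p (by omega)) u)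
  by_cases hdvd : p ^ d ∣ i
  · rw [if_pos hdvd, hcast]
    have : ∀ l ∈ range d, ((m * p ^ d) / p ^ l % p).choose (i / p ^ l % p) = 1 := by
      intro l hl
      rw [mem_range] at hl
      obtain ⟨c, hc⟩ := hdvd
      rw [hdigit m l hl, hc, mul_comm, hdigit c l hl, Nat.choose_self]
    rw [Finset.prod_congr rfl this]
    simp
  · rw [if_neg hdvd, hcast]
    have hd0 : d ≠ 0 := by rintro rfl; exact hdvd (by simpa using one_dvd i)
    have hex : ∃ l, ¬ p ^ (l + 1) ∣ i :=
      ⟨d - 1, by simpa [show d - 1 + 1 = d by omega] using hdvd⟩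
    set l := Nat.find hex with hl
    have hld : l < d := by
      have := Nat.find_min' hex (m := d - 1) (by simpa [show d - 1 + 1 = d by omega] using hdvd)
      omega
    have hpl : p ^ l ∣ i := by
      rcases Nat.eq_zero_or_pos l with h0 | h0
      · simp [h0]
      · have := Nat.find_min hex (m := l - 1) (by omega)
        simpa [show l - 1 + 1 = l by omega] using not_not.mp this
    have hnz : i / p ^ l % p ≠ 0 := by
      intro hcontra
      have : p ∣ i / p ^ l := Nat.dvd_of_mod_eq_zero hcontra
      exact Nat.find_spec hex (by
        rw [pow_succ]
        exact (Nat.dvd_div_iff_mul_dvd hpl).mp this)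
    have : (∏ l' ∈ range d, ((m * p ^ d) / p ^ l' % p).choose (i / p ^ l' % p)) = 0 :=
      Finset.prod_eq_zero (mem_range.mpr hld)
        (by rw [hdigit m l hld]; exact Nat.choose_eq_zero_of_lt (by omega))
    rw [Nat.mul_eq_zero.mpr (Or.inr this)]
    simp

/-- The map `θ̃ : f ↦ Σ_k θ⁽ᵏ⁾(f)·T^{k·p^d}`, i.e. `θ̃⁽ⁿ⁾ = θ⁽ᵏ⁾` if `n = k·p^d` and
`θ̃⁽ⁿ⁾ = 0` if `p^d ∤ n`, is again an iterative derivation. -/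
theorem frobenius_twist_is_iterative
    {F : Type*} [Field F] (p : ℕ) (hp : 0 < p) [CharP F p]
    (θ : F → PowerSeries F) (hθ : IsIterativeDerivation θ)
    (d : ℕ) (hd : 1 ≤ d) :
    IsIterativeDerivation (fun f => PowerSeries.mk fun n =>
      if p ^ d ∣ n then PowerSeries.coeff (R := F) (n / p ^ d) (θ f) else 0) := by
  obtain ⟨h1, hadd, hmul, h0, hiter⟩ := hθ
  haveI : NeZero p := ⟨by omega⟩
  have hppr : p.Prime := (CharP.char_is_prime_of_pos F p).out
  set q := p ^ d with hqdef
  have hq1 : 1 < q := by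
    have h2 := hppr.two_le
    have : p ≤ p ^ d := Nat.le_self_pow (by omega) p
    omega
  have hqpos : 0 < q := by omega
  -- transfer of congruences from `ZMod p` to `F`
  have castF : ∀ a b : ℕ, (a : ZMod p) = (b : ZMod p) → (a : F) = (b : F) := by
    intro a b h
    have := congrArg (ZMod.castHom dvd_rfl F) h
    simpa using this
  have θ0 : θ 0 = 0 := by
    have := hadd 0 0
    rw [add_zero] at this
    exact (left_eq_add.mp this)
  refine ⟨?_, ?_, ?_, ?_, ?_⟩
  · -- sends 1 to 1
    ext n
    simp only [PowerSeries.coeff_mk, h1, PowerSeries.coeff_one]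
    rcases Nat.eq_zero_or_pos n with rfl | hn
    · simp
    · rw [if_neg (by omega : ¬ n = 0)]
      by_cases hdvd : q ∣ n
      · rw [if_pos hdvd, if_neg]
        intro hz
        obtain ⟨c, rfl⟩ := hdvd
        rw [Nat.mul_div_cancel_left c hqpos] at hz
        subst hz
        simp at hn
      · rw [if_neg hdvd]
  · -- additive
    intro a b
    ext n
    simp only [PowerSeries.coeff_mk, hadd, map_add]
    split_ifs <;> simp
  · -- multiplicative
    intro a b
    ext n
    rw [PowerSeries.coeff_mul]
    simp only [PowerSeries.coeff_mk, hmul]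
    by_cases hdvd : q ∣ n
    · obtain ⟨m, rfl⟩ := hdvd
      rw [if_pos (dvd_mul_right q m), Nat.mul_div_cancel_left m hqpos, PowerSeries.coeff_mul]
      set e : ℕ × ℕ ↪ ℕ × ℕ :=
        ⟨fun y => (y.1 * q, y.2 * q), by
          intro y z h
          simp only [Prod.mk.injEq] at h
          exact Prod.ext (Nat.eq_of_mul_eq_mul_right hqpos h.1)
            (Nat.eq_of_mul_eq_mul_right hqpos h.2)⟩ with he
      have hsub : (antidiagonal m).map e ⊆ antidiagonal (q * m) := by
        intro x hx
        rw [Finset.mem_map] at hx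
        obtain ⟨y, hy, rfl⟩ := hx
        rw [HasAntidiagonal.mem_antidiagonal] at hy ⊢
        simp only [he, Function.Embedding.coeFn_mk]
        show y.1 * q + y.2 * q = q * m
        rw [← add_mul, hy, mul_comm]
      have hvanish : ∀ x ∈ antidiagonal (q * m), x ∉ (antidiagonal m).map e →
          (if q ∣ x.1 then (PowerSeries.coeff (R := F) (x.1 / q)) (θ a) else 0) *
            (if q ∣ x.2 then (PowerSeries.coeff (R := F) (x.2 / q)) (θ b) else 0) = 0 := by
        intro x hx hnx
        by_cases h1' : q ∣ x.1
        · by_cases h2' : q ∣ x.2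
          · exfalso
            apply hnx
            rw [Finset.mem_map]
            refine ⟨(x.1 / q, x.2 / q), ?_, ?_⟩
            · rw [HasAntidiagonal.mem_antidiagonal] at hx ⊢
              obtain ⟨c1, hc1⟩ := h1'
              obtain ⟨c2, hc2⟩ := h2'
              rw [hc1, hc2] at hx ⊢
              rw [Nat.mul_div_cancel_left c1 hqpos, Nat.mul_div_cancel_left c2 hqpos]
              have : q * (c1 + c2) = q * m := by rw [mul_add]; exact hx
              exact Nat.eq_of_mul_eq_mul_left hqpos this
            · exact Prod.ext (Nat.div_mul_cancel h1') (Nat.div_mul_cancel h2')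
          · rw [if_neg h2', mul_zero]
        · rw [if_neg h1', zero_mul]
      rw [← Finset.sum_subset hsub hvanish, Finset.sum_map]
      refine Finset.sum_congr rfl fun y _ => ?_
      simp only [he, Function.Embedding.coeFn_mk]
      show _ = (if q ∣ y.1 * q then (PowerSeries.coeff (y.1 * q / q)) (θ a) else 0) *
        (if q ∣ y.2 * q then (PowerSeries.coeff (y.2 * q / q)) (θ b) else 0)
      rw [if_pos (dvd_mul_left q y.1), if_pos (dvd_mul_left q y.2),
        Nat.mul_div_cancel _ hqpos, Nat.mul_div_cancel _ hqpos]
    · rw [if_neg hdvd]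
      symm
      apply Finset.sum_eq_zero
      intro x hx
      rw [HasAntidiagonal.mem_antidiagonal] at hx
      by_cases h1' : q ∣ x.1
      · by_cases h2' : q ∣ x.2
        · exact absurd (hx ▸ Nat.dvd_add h1' h2') hdvd
        · rw [if_neg h2', mul_zero]
      · rw [if_neg h1', zero_mul]
  · -- coefficient 0
    intro r
    simp [PowerSeries.coeff_mk, h0]
  · -- iterativity
    intro i j r
    simp only [PowerSeries.coeff_mk]
    by_cases hj : q ∣ j
    · obtain ⟨j', rfl⟩ := hj
      rw [if_pos (dvd_mul_right q j'), Nat.mul_div_cancel_left j' hqpos]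
      by_cases hi : q ∣ i
      · obtain ⟨i', rfl⟩ := hi
        rw [if_pos (dvd_mul_right q i'), Nat.mul_div_cancel_left i' hqpos, hiter,
          if_pos (dvd_add (dvd_mul_right q i') (dvd_mul_right q j'))]
        have hdivs : (q * i' + q * j') / q = i' + j' := by
          rw [← mul_add, Nat.mul_div_cancel_left _ hqpos]
        rw [hdivs]
        rw [nsmul_eq_mul, nsmul_eq_mul]
        congr 1
        apply castF
        have h1c := choose_mul_pow_cast hppr d (i' + j') (i' * q)
        rw [if_pos (Dvd.intro_left i' rfl), Nat.mul_div_cancel i' hqpos] at h1c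
        rw [← h1c]
        congr 2
        · rw [mul_comm q i', mul_comm q j', ← add_mul]
        · rw [mul_comm]
      · rw [if_neg hi]
        have : ¬ q ∣ (i + q * j') := by
          intro hcon
          exact hi ((Nat.dvd_add_right (dvd_mul_right q j')).mp (by rwa [add_comm] at hcon))
        rw [if_neg this, smul_zero]
    · rw [if_neg hj]
      simp only [θ0, map_zero, ite_self]
      by_cases hij : q ∣ (i + j)
      · obtain ⟨m, hm⟩ := hij
        rw [if_pos ⟨m, hm⟩]
        have hi : ¬ q ∣ i := by
          intro hcon
          exact hj ((Nat.dvd_add_right hcon).mp ⟨m, hm⟩)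
        have hchoose : ((i + j).choose i : F) = 0 := by
          have h1c := choose_mul_pow_cast hppr d m i
          rw [if_neg hi] at h1c
          have : ((i + j).choose i : F) = ((0 : ℕ) : F) := by
            apply castF
            rw [Nat.cast_zero, ← h1c, mul_comm m q, ← hm]
          simpa using this
        rw [nsmul_eq_mul, hchoose, zero_mul]
      · rw [if_neg hij, smul_zero]
end

section
/- Let S be a nonzero commutative ring with an iterative derivation θ_S, and let R ⊆ S be a subring with θ_S^{(k)}(R) ⊆ R for all k, so that the restriction θ_R of θ_S is an iterative derivation on R. Assume that R is ID-simple, i.e. the only ideals I of R with θ_R^{(k)}(I) ⊆ I for all k ∈ ℕ are the zero ideal and R (so in particular the constants R^θ form a field), and assume that the ring of constants S^θ of S is a field. Then the canonical ring homomorphism S^θ ⊗_{R^θ} R → S, c ⊗ r ↦ c·r, is injective. -/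
theorem IsIterativeDerivation.map_zero {R : Type*} [CommRing R] {θ : R → PowerSeries R}
    (hθ : IsIterativeDerivation θ) : θ 0 = 0 := by
  have h := hθ.2.1 0 0
  rw [add_zero] at h
  exact (left_eq_add.mp h)

/-- The subring of constants `R^θ = {r | θ r = C r}` of an iterative derivation. -/
def constantsSubring {R : Type*} [CommRing R] (θ : R → PowerSeries R)
    (hθ : IsIterativeDerivation θ) : Subring R where
  carrier := {r : R | θ r = PowerSeries.C (R := R) r}
  one_mem' := by simpa using hθ.1
  zero_mem' := by simpa using hθ.map_zero
  mul_mem' := by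
    intro a b ha hb
    simp only [Set.mem_setOf_eq] at *
    rw [hθ.2.2.1 a b, ha, hb, ← map_mul]
  add_mem' := by
    intro a b ha hb
    simp only [Set.mem_setOf_eq] at *
    rw [hθ.2.1 a b, ha, hb, ← map_add]
  neg_mem' := by
    intro a ha
    simp only [Set.mem_setOf_eq] at *
    have h := hθ.2.1 a (-a)
    rw [add_neg_cancel, hθ.map_zero] at h
    have : θ (-a) = -θ a := by linear_combination -h
    rw [this, ha, ← map_neg]

theorem IsIterativeDerivation.map_sum' {S : Type*} [CommRing S] {θ : S → PowerSeries S}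
    (hθ : IsIterativeDerivation θ) {ι : Type*} (t : Finset ι) (f : ι → S) :
    θ (∑ i ∈ t, f i) = ∑ i ∈ t, θ (f i) := by
  classical
  induction t using Finset.induction with
  | empty => simpa using hθ.map_zero
  | insert _ _ h ih => rw [Finset.sum_insert h, Finset.sum_insert h, hθ.2.1, ih]

theorem core_aux {S : Type*} [CommRing S] [Nontrivial S] {θ : S → PowerSeries S}
    (hθ : IsIterativeDerivation θ) (R : Subring S)
    (hstab : ∀ (k : ℕ) (r : S), r ∈ R → PowerSeries.coeff (R := S) k (θ r) ∈ R)
    (hsimple : ∀ I : Ideal R,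
      (∀ (k : ℕ) (x : R), x ∈ I → (⟨PowerSeries.coeff (R := S) k (θ x), hstab k x x.2⟩ : R) ∈ I) →
      I = ⊥ ∨ I = ⊤)
    {ι : Type*} (c : ι → S) (hcK : ∀ i, θ (c i) = PowerSeries.C (R := S) (c i))
    (hc : ∀ (t : Finset ι) (a : ι → S), (∀ i, a i ∈ R) →
        (∀ i, θ (a i) = PowerSeries.C (R := S) (a i)) →
        ∑ i ∈ t, a i * c i = 0 → ∀ i ∈ t, a i = 0)
    (t : Finset ι) (r : ι → S) (hr : ∀ i, r i ∈ R)
    (hsum : ∑ i ∈ t, c i * r i = 0) : ∀ i ∈ t, r i = 0 := by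
  classical
  revert r
  induction t using Finset.strongInduction with
  | _ t ih =>
  intro r hr hsum i₀ hi₀
  by_contra hne
  have key : ∀ (f : ι → S), (∑ i ∈ t, c i * f i = 0) → ∀ k : ℕ,
      ∑ i ∈ t, c i * PowerSeries.coeff (R := S) k (θ (f i)) = 0 := by
    intro f hf k
    have h1 : θ (∑ i ∈ t, c i * f i) = 0 := by rw [hf, hθ.map_zero]
    rw [hθ.map_sum'] at h1
    have h2 : ∑ i ∈ t, PowerSeries.C (R := S) (c i) * θ (f i) = 0 := by
      rw [← h1]
      exact Finset.sum_congr rfl fun i _ => by rw [hθ.2.2.1, hcK]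
    have h3 := congrArg (PowerSeries.coeff (R := S) k) h2
    simpa [PowerSeries.coeff_C_mul] using h3
  let I : Ideal R :=
    { carrier := {x : R | ∃ f : ι → S, (∀ i, f i ∈ R) ∧ f i₀ = (x : S) ∧
        ∑ i ∈ t, c i * f i = 0}
      zero_mem' := ⟨0, fun _ => R.zero_mem, rfl, by simp⟩
      add_mem' := by
        rintro x y ⟨f, hf, hfx, hfs⟩ ⟨g, hg, hgx, hgs⟩
        refine ⟨f + g, fun i => R.add_mem (hf i) (hg i), by simp [hfx, hgx], ?_⟩
        simp only [Pi.add_apply, mul_add, Finset.sum_add_distrib, hfs, hgs, add_zero]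
      smul_mem' := by
        rintro s x ⟨f, hf, hfx, hfs⟩
        refine ⟨fun i => (s : S) * f i, fun i => R.mul_mem s.2 (hf i), by
          simp [hfx], ?_⟩
        have : ∑ i ∈ t, c i * ((s : S) * f i) = (s : S) * ∑ i ∈ t, c i * f i := by
          rw [Finset.mul_sum]; exact Finset.sum_congr rfl fun i _ => by ring
        rw [this, hfs, mul_zero] }
  have hIstab : ∀ (k : ℕ) (x : R), x ∈ I →
      (⟨PowerSeries.coeff (R := S) k (θ x), hstab k x x.2⟩ : R) ∈ I := by
    rintro k x ⟨f, hf, hfx, hfs⟩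
    exact ⟨fun i => PowerSeries.coeff (R := S) k (θ (f i)), fun i => hstab k _ (hf i),
      by dsimp only; rw [hfx], key f hfs k⟩
  have hmem : (⟨r i₀, hr i₀⟩ : R) ∈ I := ⟨r, hr, rfl, hsum⟩
  have hInebot : I ≠ ⊥ := by
    intro hbot
    rw [hbot, Ideal.mem_bot] at hmem
    exact hne (congrArg Subtype.val hmem)
  have hItop : I = ⊤ := (hsimple I hIstab).resolve_left hInebot
  have h1 : (1 : R) ∈ I := hItop ▸ Submodule.mem_top
  obtain ⟨g, hgR, hg1, hgs⟩ := h1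
  have hgk : ∀ k : ℕ, k ≠ 0 → ∀ i ∈ t.erase i₀, PowerSeries.coeff (R := S) k (θ (g i)) = 0 := by
    intro k hk
    refine ih (t.erase i₀) (Finset.erase_ssubset hi₀)
      (fun i => PowerSeries.coeff (R := S) k (θ (g i))) (fun i => hstab _ _ (hgR i)) ?_
    have h0 := key g hgs k
    rw [← Finset.sum_erase_add t _ hi₀] at h0
    have hz : PowerSeries.coeff (R := S) k (θ (g i₀)) = 0 := by
      rw [hg1, OneMemClass.coe_one, hθ.1]
      simp [PowerSeries.coeff_one, hk]
    rw [hz, mul_zero, add_zero] at h0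
    exact h0
  set a : ι → S := fun i => if i ∈ t then g i else 0 with ha
  have haR : ∀ i, a i ∈ R := by
    intro i; by_cases h : i ∈ t <;> simp [ha, h, hgR i, R.zero_mem]
  have haK : ∀ i, θ (a i) = PowerSeries.C (R := S) (a i) := by
    intro i
    by_cases hit : i ∈ t
    · simp only [ha, if_pos hit]
      by_cases hii : i = i₀
      · subst hii; rw [hg1, OneMemClass.coe_one, hθ.1, map_one]
      · ext k
        rcases k with _ | k
        · rw [hθ.2.2.2.1, PowerSeries.coeff_zero_C]
        · rw [hgk (k + 1) (Nat.succ_ne_zero k) i (Finset.mem_erase.mpr ⟨hii, hit⟩),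
            PowerSeries.coeff_C, if_neg (Nat.succ_ne_zero k)]
    · simp only [ha, if_neg hit]
      rw [hθ.map_zero, map_zero]
  have hasum : ∑ i ∈ t, a i * c i = 0 := by
    rw [← hgs]
    exact Finset.sum_congr rfl fun i hi => by simp [ha, hi]; ring
  have := hc t a haR haK hasum i₀ hi₀
  rw [ha] at this
  simp only [if_pos hi₀] at this
  rw [hg1, OneMemClass.coe_one] at this
  exact one_ne_zero this

theorem constants_inf_isField {S : Type*} [CommRing S] [Nontrivial S]
    {θ : S → PowerSeries S} (hθ : IsIterativeDerivation θ) (R : Subring S)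
    (hstab : ∀ (k : ℕ) (r : S), r ∈ R → PowerSeries.coeff (R := S) k (θ r) ∈ R)
    (hsimple : ∀ I : Ideal R,
      (∀ (k : ℕ) (x : R), x ∈ I → (⟨PowerSeries.coeff (R := S) k (θ x), hstab k x x.2⟩ : R) ∈ I) →
      I = ⊥ ∨ I = ⊤) :
    IsField ↥(constantsSubring θ hθ ⊓ R) := by
  refine ⟨⟨0, 1, fun h => ?_⟩, mul_comm, ?_⟩
  · exact zero_ne_one (congrArg Subtype.val h)
  · intro a ha
    have haK : θ (a : S) = PowerSeries.C (R := S) (a : S) := (Subring.mem_inf.mp a.2).1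
    have haR : (a : S) ∈ R := (Subring.mem_inf.mp a.2).2
    set a' : R := ⟨(a : S), haR⟩ with ha'
    let I : Ideal R := Ideal.span {a'}
    have hIstab : ∀ (k : ℕ) (x : R), x ∈ I →
        (⟨PowerSeries.coeff (R := S) k (θ x), hstab k x x.2⟩ : R) ∈ I := by
      intro k x hx
      rw [Ideal.mem_span_singleton'] at hx ⊢
      obtain ⟨y, hy⟩ := hx
      refine ⟨⟨PowerSeries.coeff (R := S) k (θ y), hstab k y y.2⟩, Subtype.ext ?_⟩
      have hxy : (x : S) = (y : S) * (a : S) := by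
        rw [← hy]; rfl
      show PowerSeries.coeff (R := S) k (θ y) * (a : S) = PowerSeries.coeff (R := S) k (θ x)
      rw [hxy, hθ.2.2.1, haK, PowerSeries.coeff_mul_C]
    have hmem : a' ∈ I := Ideal.mem_span_singleton_self a'
    have hInebot : I ≠ ⊥ := by
      intro hbot
      rw [hbot, Ideal.mem_bot] at hmem
      have hz : (a : S) = 0 := congrArg Subtype.val hmem
      exact ha (Subtype.ext hz)
    have hItop : I = ⊤ := (hsimple I hIstab).resolve_left hInebot
    have h1 : (1 : R) ∈ I := hItop ▸ Submodule.mem_top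
    rw [Ideal.mem_span_singleton'] at h1
    obtain ⟨b, hb⟩ := h1
    have hbS : (b : S) * (a : S) = 1 := by
      have := congrArg (Subtype.val) hb
      simpa using this
    have hbK : θ (b : S) = PowerSeries.C (R := S) (b : S) := by
      have h2 : θ ((b : S)) * PowerSeries.C (R := S) (a : S) = 1 := by
        rw [← haK, ← hθ.2.2.1, hbS, hθ.1]
      ext k
      rcases k with _ | k
      · rw [hθ.2.2.2.1, PowerSeries.coeff_zero_C]
      · have h3 := congrArg (PowerSeries.coeff (R := S) (k + 1)) h2
        rw [PowerSeries.coeff_mul_C, PowerSeries.coeff_one, if_neg (Nat.succ_ne_zero k)] at h3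
        have h4 : PowerSeries.coeff (R := S) (k + 1) (θ (b : S)) * ((a : S) * (b : S)) = 0 := by
          rw [← mul_assoc, h3, zero_mul]
        rw [mul_comm (a : S), hbS, mul_one] at h4
        rw [h4, PowerSeries.coeff_C, if_neg (Nat.succ_ne_zero k)]
    refine ⟨⟨(b : S), Subring.mem_inf.mpr ⟨hbK, b.2⟩⟩, Subtype.ext ?_⟩
    show (a : S) * (b : S) = 1
    rw [mul_comm]; exact hbS

open scoped TensorProduct

open scoped TensorProduct

theorem productMap_injective_aux {A : Type*} [Field A]
    {K R' S : Type*} [CommRing K] [CommRing R'] [CommRing S]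
    [Algebra A K] [Algebra A R'] [Algebra A S]
    (f : K →ₐ[A] S) (g : R' →ₐ[A] S)
    (H : ∀ (t : Finset (Module.Basis.ofVectorSpaceIndex A K))
        (r : Module.Basis.ofVectorSpaceIndex A K → R'),
        ∑ i ∈ t, f (Module.Basis.ofVectorSpace A K i) * g (r i) = 0 → ∀ i ∈ t, r i = 0) :
    Function.Injective (Algebra.TensorProduct.productMap f g) := by
  classical
  rw [injective_iff_map_eq_zero]
  intro x hx
  set Ψ := Algebra.TensorProduct.productMap g f with hΨ
  set y := (TensorProduct.comm A K R') x with hy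
  have hcomm : ∀ z : K ⊗[A] R',
      Ψ ((TensorProduct.comm A K R') z) = Algebra.TensorProduct.productMap f g z := by
    intro z
    induction z using TensorProduct.induction_on with
    | zero => simp
    | tmul c r =>
        rw [TensorProduct.comm_tmul, hΨ, Algebra.TensorProduct.productMap_apply_tmul,
          Algebra.TensorProduct.productMap_apply_tmul]
        exact mul_comm _ _
    | add u v hu hv => rw [map_add, map_add, map_add, hu, hv]
  have hΨy : Ψ y = 0 := by rw [hy, hcomm]; exact hx
  have hΨs : ∀ (r : R') (z : R' ⊗[A] K), Ψ (r • z) = g r * Ψ z := by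
    intro r z
    induction z using TensorProduct.induction_on with
    | zero => simp
    | tmul a c =>
        rw [TensorProduct.smul_tmul', hΨ, Algebra.TensorProduct.productMap_apply_tmul,
          Algebra.TensorProduct.productMap_apply_tmul, smul_eq_mul, map_mul, mul_assoc]
    | add u v hu hv => rw [smul_add, map_add, hu, hv, map_add, mul_add]
  set b := Module.Basis.ofVectorSpace A K with hb
  set bR := b.baseChange R' with hbR
  set l := bR.repr y with hl
  have hyrep : y = ∑ i ∈ l.support, l i • bR i := by
    conv_lhs => rw [← bR.linearCombination_repr y]
    rw [Finsupp.linearCombination_apply, Finsupp.sum]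
  have h0 : ∑ i ∈ l.support, f (b i) * g (l i) = 0 := by
    rw [← hΨy, hyrep, map_sum]
    refine Finset.sum_congr rfl fun i _ => ?_
    rw [hΨs, hbR, Module.Basis.baseChange_apply, hΨ, Algebra.TensorProduct.productMap_apply_tmul,
      map_one, one_mul]
    exact mul_comm _ _
  have hz := H l.support (fun i => l i) h0
  have hlzero : l = 0 := by
    ext i
    by_cases hi : i ∈ l.support
    · exact hz i hi
    · exact Finsupp.notMem_support_iff.mp hi
  have hyzero : y = 0 := by rw [hyrep, hlzero]; simp
  exact (LinearEquiv.map_eq_zero_iff (TensorProduct.comm A K R')).mp hyzero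

/-- Lemma 4.3: if `R ⊆ S` is a θ-stable subring which is ID-simple, and the constants
`S^θ` form a field, then the canonical map `S^θ ⊗_{R^θ} R → S`, `c ⊗ r ↦ c·r`,
is injective.  Here `R^θ = S^θ ⊓ R`. -/
theorem embedding_lemma
    {S : Type*} [CommRing S] [Nontrivial S]
    (θ : S → PowerSeries S) (hθ : IsIterativeDerivation θ)
    (R : Subring S)
    (hstab : ∀ (k : ℕ) (r : S), r ∈ R → PowerSeries.coeff (R := S) k (θ r) ∈ R)
    (hsimple : ∀ I : Ideal R,
      (∀ (k : ℕ) (x : R), x ∈ I → (⟨PowerSeries.coeff (R := S) k (θ x), hstab k x x.2⟩ : R) ∈ I) →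
      I = ⊥ ∨ I = ⊤)
    (hSfield : IsField (constantsSubring θ hθ)) :
    letI A : Subring S := constantsSubring θ hθ ⊓ R
    letI : Algebra A (constantsSubring θ hθ) :=
      (Subring.inclusion (inf_le_left : A ≤ constantsSubring θ hθ)).toAlgebra
    letI : Algebra A R := (Subring.inclusion (inf_le_right : A ≤ R)).toAlgebra
    letI : Algebra A S := A.subtype.toAlgebra
    Function.Injective
      (Algebra.TensorProduct.productMap
        ({ toRingHom := (constantsSubring θ hθ).subtype,
           commutes' := fun _ => rfl } : (constantsSubring θ hθ) →ₐ[A] S)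
        ({ toRingHom := R.subtype, commutes' := fun _ => rfl } : R →ₐ[A] S)) := by
  classical
  letI A : Subring S := constantsSubring θ hθ ⊓ R
  letI iKA : Algebra A (constantsSubring θ hθ) :=
    (Subring.inclusion (inf_le_left : A ≤ constantsSubring θ hθ)).toAlgebra
  letI iAR : Algebra A R := (Subring.inclusion (inf_le_right : A ≤ R)).toAlgebra
  letI iAS : Algebra A S := A.subtype.toAlgebra
  letI : Field A := (constants_inf_isField hθ R hstab hsimple).toField
  refine productMap_injective_aux _ _ ?_
  intro t r hsum0 i hi
  set b := Module.Basis.ofVectorSpace A (constantsSubring θ hθ) with hb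
  have hlin : ∀ (t' : Finset (Module.Basis.ofVectorSpaceIndex A (constantsSubring θ hθ)))
      (a : Module.Basis.ofVectorSpaceIndex A (constantsSubring θ hθ) → S),
      (∀ j, a j ∈ R) → (∀ j, θ (a j) = PowerSeries.C (R := S) (a j)) →
      ∑ j ∈ t', a j * ((b j : constantsSubring θ hθ) : S) = 0 → ∀ j ∈ t', a j = 0 := by
    intro t' a haR haK hsum1 j hj
    have haA : ∀ j, a j ∈ A := fun j => Subring.mem_inf.mpr ⟨haK j, haR j⟩
    set a' : Module.Basis.ofVectorSpaceIndex A (constantsSubring θ hθ) → A :=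
      fun j => ⟨a j, haA j⟩ with ha'
    have hterm : ∀ j', ((a' j' • b j' : constantsSubring θ hθ) : S)
        = a j' * ((b j' : constantsSubring θ hθ) : S) := fun j' => rfl
    have h1 : ∑ j' ∈ t', a' j' • b j' = 0 := by
      refine Subtype.ext ?_
      have hcast : ((∑ j' ∈ t', a' j' • b j' : constantsSubring θ hθ) : S)
          = ∑ j' ∈ t', ((a' j' • b j' : constantsSubring θ hθ) : S) :=
        AddSubmonoidClass.coe_finset_sum _ _
      rw [hcast]
      simp only [hterm]
      exact hsum1
    have h2 := linearIndependent_iff'.mp b.linearIndependent t' a' h1 j hj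
    exact congrArg Subtype.val h2
  have hres := core_aux hθ R hstab hsimple
    (fun j => ((b j : constantsSubring θ hθ) : S)) (fun j => (b j).2) hlin
    t (fun j => ((r j : R) : S)) (fun j => (r j).2) ?_ i hi
  · exact Subtype.ext hres
  · rw [← hsum0]
    exact Finset.sum_congr rfl fun j _ => rfl
end

section
/- Let F be a field, let θ be an iterative derivation on F, let P ∈ F⟦T⟧ have constant coefficient 0, and define θ̃ : F → F⟦T⟧ by θ̃(f) := PowerSeries.subst P (θ f) = Σ_k θ^{(k)}(f)·P^k. Let θ̃_U : F →+* F⟦U⟧ denote θ̃ with output variable renamed to U, and let θ̃_U⟦T⟧ := PowerSeries.map θ̃_U : F⟦T⟧ → (F⟦U⟧)⟦T⟧ be the coefficientwise application of θ̃_U. Then for every f ∈ F, one has θ̃_U⟦T⟧(θ̃(f)) = PowerSeries.subst (ι(P) + θ̃_U⟦T⟧(P)) (θ f) in (F⟦U⟧)⟦T⟧, where ι(P) denotes the copy of P placed in the variable U (an element of F⟦U⟧ viewed as a constant of (F⟦U⟧)⟦T⟧); in other words, (θ̃_U⟦T⟧ ∘ θ̃_T)(f) = Σ_m θ^{(m)}(f)·(P(U)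 + θ̃_U⟦T⟧(P(T)))^m. -/
open Finset PowerSeries


/-- Substitution `g ↦ g(P)` of a power series `P` (with zero constant coefficient)
into a one-variable power series `g`; since `coeff n (P ^ k) = 0` for `k > n` when
`constantCoeff P = 0`, the coefficientwise truncated sum below is the honest
substitution `Σ_k (coeff k g) · P^k`. -/
noncomputable def psSubst {F : Type*} [CommRing F] (P g : PowerSeries F) : PowerSeries F :=
  PowerSeries.mk fun n => ∑ k ∈ Finset.range (n + 1),
    PowerSeries.coeff (R := F) k g * PowerSeries.coeff (R := F) n (P ^ k)

/-- Substitution `g ↦ g(A)` of a two-variable power series `A ∈ F⟦U⟧⟦T⟧` lying in the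
ideal `(U, T)` into a one-variable power series `g ∈ F⟦X⟧`: the coefficient of
`U^i T^j` in `A ^ k` vanishes for `k > i + j`, so the truncated sum below is the honest
substitution `Σ_k (coeff k g) · A^k`. -/
noncomputable def psSubst2 {F : Type*} [CommRing F]
    (A : PowerSeries (PowerSeries F)) (g : PowerSeries F) : PowerSeries (PowerSeries F) :=
  PowerSeries.mk fun j => PowerSeries.mk fun i =>
    ∑ k ∈ Finset.range (i + j + 1),
      PowerSeries.coeff (R := F) k g *
        PowerSeries.coeff (R := F) i (PowerSeries.coeff (R := PowerSeries F) j (A ^ k))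


private lemma sum_antidiag_box {M : Type*} [AddCommMonoid M] (N : ℕ) (g : ℕ → ℕ → M)
    (hg : ∀ u v, N < u + v → g u v = 0) :
    ∑ k ∈ range (N + 1), ∑ p ∈ antidiagonal k, g p.1 p.2
      = ∑ u ∈ range (N + 1), ∑ v ∈ range (N + 1), g u v := by
  have hdisj : (↑(range (N + 1)) : Set ℕ).PairwiseDisjoint (antidiagonal : ℕ → Finset (ℕ × ℕ)) := by
    intro a _ b _ hab
    simp only [Function.onFun, Finset.disjoint_left]
    intro p hpa hpb
    rw [HasAntidiagonal.mem_antidiagonal] at hpa hpb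
    exact hab (hpa ▸ hpb)
  rw [← Finset.sum_biUnion hdisj, ← Finset.sum_product']
  apply Finset.sum_subset
  · intro p hp
    simp only [Finset.mem_biUnion, mem_range, HasAntidiagonal.mem_antidiagonal] at hp
    obtain ⟨k, hk, h⟩ := hp
    simp only [Finset.mem_product, mem_range]
    omega
  · intro p _ hnp
    apply hg
    simp only [Finset.mem_biUnion, mem_range, HasAntidiagonal.mem_antidiagonal] at hnp
    by_contra h
    push_neg at h
    exact hnp ⟨p.1 + p.2, by omega, rfl⟩

private lemma coeff_pow_zero {F : Type*} [CommRing F] {P : PowerSeries F}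
    (hP : PowerSeries.constantCoeff (R := F) P = 0) {k n : ℕ} (h : n < k) :
    PowerSeries.coeff (R := F) n (P ^ k) = 0 := by
  have hX : (PowerSeries.X : PowerSeries F) ^ k ∣ P ^ k :=
    pow_dvd_pow_of_dvd (PowerSeries.X_dvd_iff.mpr hP) k
  exact (PowerSeries.X_pow_dvd_iff.mp hX) n h

private lemma coeff_psSubst {F : Type*} [CommRing F] (P g : PowerSeries F) (n : ℕ) :
    PowerSeries.coeff (R := F) n (psSubst P g)
      = ∑ k ∈ range (n + 1), PowerSeries.coeff (R := F) k g * PowerSeries.coeff (R := F) n (P ^ k) :=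
  PowerSeries.coeff_mk _ _

private lemma coeff_psSubst2 {F : Type*} [CommRing F] (A : PowerSeries (PowerSeries F))
    (g : PowerSeries F) (n i : ℕ) :
    PowerSeries.coeff (R := F) i (PowerSeries.coeff (R := PowerSeries F) n (psSubst2 A g))
      = ∑ m ∈ range (i + n + 1), PowerSeries.coeff (R := F) m g
          * PowerSeries.coeff (R := F) i (PowerSeries.coeff (R := PowerSeries F) n (A ^ m)) := by
  simp only [psSubst2, PowerSeries.coeff_mk]

private lemma psSubst_zero {F : Type*} [CommRing F] (P : PowerSeries F) :
    psSubst P (0 : PowerSeries F) = 0 := by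
  ext n
  simp [coeff_psSubst]

private lemma psSubst_add {F : Type*} [CommRing F] (P g h : PowerSeries F) :
    psSubst P (g + h) = psSubst P g + psSubst P h := by
  ext n
  simp [coeff_psSubst, add_mul, Finset.sum_add_distrib]

private lemma psSubst_one {F : Type*} [CommRing F] (P : PowerSeries F) :
    psSubst P (1 : PowerSeries F) = 1 := by
  ext n
  rw [coeff_psSubst, Finset.sum_eq_single 0]
  · simp
  · intro k _ hk0
    simp [PowerSeries.coeff_one, hk0]
  · simp

private lemma psSubst_mul {F : Type*} [CommRing F] {P : PowerSeries F}
    (hP : PowerSeries.constantCoeff (R := F) P = 0) (g h : PowerSeries F) :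
    psSubst P (g * h) = psSubst P g * psSubst P h := by
  ext i
  rw [coeff_psSubst, PowerSeries.coeff_mul]
  simp only [coeff_psSubst, PowerSeries.coeff_mul, Finset.sum_mul]
  calc
    ∑ a ∈ range (i + 1), ∑ p ∈ antidiagonal a,
        PowerSeries.coeff (R := F) p.1 g * PowerSeries.coeff (R := F) p.2 h * PowerSeries.coeff (R := F) i (P ^ a)
      = ∑ a ∈ range (i + 1), ∑ p ∈ antidiagonal a,
        PowerSeries.coeff (R := F) p.1 g * PowerSeries.coeff (R := F) p.2 h
          * PowerSeries.coeff (R := F) i (P ^ (p.1 + p.2)) := by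
        refine Finset.sum_congr rfl fun a _ => Finset.sum_congr rfl fun p hp => ?_
        rw [HasAntidiagonal.mem_antidiagonal] at hp
        rw [hp]
    _ = ∑ u ∈ range (i + 1), ∑ v ∈ range (i + 1),
        PowerSeries.coeff (R := F) u g * PowerSeries.coeff (R := F) v h
          * PowerSeries.coeff (R := F) i (P ^ (u + v)) := by
        refine sum_antidiag_box i (fun u v => PowerSeries.coeff (R := F) u g * PowerSeries.coeff (R := F) v h
          * PowerSeries.coeff (R := F) i (P ^ (u + v))) fun u v huv => ?_
        show PowerSeries.coeff (R := F) u g * PowerSeries.coeff (R := F) v h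
          * PowerSeries.coeff (R := F) i (P ^ (u + v)) = 0
        rw [coeff_pow_zero hP huv, mul_zero]
    _ = ∑ u ∈ range (i + 1), ∑ v ∈ range (i + 1),
        PowerSeries.coeff (R := F) u g * PowerSeries.coeff (R := F) v h
          * ∑ q ∈ antidiagonal i, PowerSeries.coeff (R := F) q.1 (P ^ u) * PowerSeries.coeff (R := F) q.2 (P ^ v) := by
        refine Finset.sum_congr rfl fun u _ => Finset.sum_congr rfl fun v _ => ?_
        rw [pow_add, PowerSeries.coeff_mul]
    _ = ∑ u ∈ range (i + 1), ∑ q ∈ antidiagonal i, ∑ v ∈ range (i + 1),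
        PowerSeries.coeff (R := F) u g * PowerSeries.coeff (R := F) q.1 (P ^ u)
          * (PowerSeries.coeff (R := F) v h * PowerSeries.coeff (R := F) q.2 (P ^ v)) := by
        refine Finset.sum_congr rfl fun u _ => ?_
        simp only [Finset.mul_sum]
        rw [Finset.sum_comm]
        exact Finset.sum_congr rfl fun q _ => Finset.sum_congr rfl fun v _ => by ring
    _ = ∑ q ∈ antidiagonal i, ∑ u ∈ range (i + 1), ∑ v ∈ range (i + 1),
        PowerSeries.coeff (R := F) u g * PowerSeries.coeff (R := F) q.1 (P ^ u)
          * (PowerSeries.coeff (R := F) v h * PowerSeries.coeff (R := F) q.2 (P ^ v)) := Finset.sum_comm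
    _ = ∑ q ∈ antidiagonal i, ∑ u ∈ range (i + 1),
        (PowerSeries.coeff (R := F) u g * PowerSeries.coeff (R := F) q.1 (P ^ u)
          * ∑ v ∈ range (q.2 + 1), PowerSeries.coeff (R := F) v h * PowerSeries.coeff (R := F) q.2 (P ^ v)) := by
        refine Finset.sum_congr rfl fun q hq => Finset.sum_congr rfl fun u _ => ?_
        rw [HasAntidiagonal.mem_antidiagonal] at hq
        rw [← Finset.mul_sum]
        congr 1
        refine (Finset.sum_subset (Finset.range_subset_range.mpr (by omega)) fun v _ hv => ?_).symm
        rw [mem_range, not_lt] at hv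
        rw [coeff_pow_zero hP (by omega), mul_zero]
    _ = ∑ q ∈ antidiagonal i, ∑ u ∈ range (q.1 + 1),
        (PowerSeries.coeff (R := F) u g * PowerSeries.coeff (R := F) q.1 (P ^ u)
          * ∑ v ∈ range (q.2 + 1), PowerSeries.coeff (R := F) v h * PowerSeries.coeff (R := F) q.2 (P ^ v)) := by
        refine Finset.sum_congr rfl fun q hq => ?_
        rw [HasAntidiagonal.mem_antidiagonal] at hq
        refine (Finset.sum_subset (Finset.range_subset_range.mpr (by omega)) fun u _ hu => ?_).symm
        rw [mem_range, not_lt] at hu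
        rw [coeff_pow_zero hP (by omega), mul_zero, zero_mul]

/-- The key computation in the proof of Lemma 3.3: for `θ̃ := subst P ∘ θ`, applying
`θ̃` (with output variable `U`) coefficientwise to `θ̃ f ∈ F⟦T⟧` gives the substitution
of `P(U) + θ̃_U⟦T⟧(P(T)) ∈ F⟦U⟧⟦T⟧` into `θ f`, i.e.
`(θ̃_U⟦T⟧ ∘ θ̃_T)(f) = Σ_m θ⁽ᵐ⁾(f)·(P(U) + θ̃_U⟦T⟧(P(T)))^m`.  Here `P(U)` is the copy
`C P` of `P` placed in the variable `U`, viewed as a constant of `F⟦U⟧⟦T⟧`. -/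
theorem composed_twisted_derivation_eq_subst
    {F : Type*} [Field F]
    (θ : F → PowerSeries F) (hθ : IsIterativeDerivation θ)
    (P : PowerSeries F) (hP : PowerSeries.constantCoeff (R := F) P = 0) :
    ∀ f : F,
      (PowerSeries.mk fun n =>
          psSubst P (θ (PowerSeries.coeff (R := F) n (psSubst P (θ f))))) =
        psSubst2
          (PowerSeries.C (R := PowerSeries F) P +
            PowerSeries.mk fun n => psSubst P (θ (PowerSeries.coeff (R := F) n P)))
          (θ f) := by
  obtain ⟨hone, hadd, hmul, hcoeff0, hiter⟩ := hθ
  have hz : θ 0 = 0 := by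
    have h00 := hadd 0 0
    rw [add_zero] at h00
    exact left_eq_add.mp h00
  let τ : F →+* PowerSeries F :=
    { toFun := fun x => psSubst P (θ x)
      map_one' := by show psSubst P (θ 1) = 1; rw [hone, psSubst_one]
      map_mul' := fun x y => by
        show psSubst P (θ (x * y)) = psSubst P (θ x) * psSubst P (θ y)
        rw [hmul, psSubst_mul hP]
      map_zero' := by show psSubst P (θ 0) = 0; rw [hz, psSubst_zero]
      map_add' := fun x y => by
        show psSubst P (θ (x + y)) = psSubst P (θ x) + psSubst P (θ y)
        rw [hadd, psSubst_add] }
  have hτ : ∀ x, τ x = psSubst P (θ x) := fun _ => rfl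
  have hQ : (PowerSeries.mk fun j => psSubst P (θ (PowerSeries.coeff (R := F) j P)))
      = PowerSeries.map τ P := by
    ext j
    rw [PowerSeries.coeff_mk, PowerSeries.coeff_map, hτ]
  have hθsum : ∀ (s : Finset ℕ) (g : ℕ → F), θ (∑ x ∈ s, g x) = ∑ x ∈ s, θ (g x) := by
    intro s g
    induction s using Finset.cons_induction with
    | empty => simpa using hz
    | cons a s ha ih => rw [Finset.sum_cons, hadd, ih, Finset.sum_cons]
  -- θ applied to coefficients of powers of P beyond the order vanish
  have hθP : ∀ {k n : ℕ}, n < k → θ (PowerSeries.coeff (R := F) n (P ^ k)) = 0 := by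
    intro k n h
    rw [coeff_pow_zero hP h, hz]
  intro f
  apply PowerSeries.ext
  intro n
  apply PowerSeries.ext
  intro i
  rw [PowerSeries.coeff_mk, hQ]
  have hL : PowerSeries.coeff (R := F) i (psSubst P (θ (PowerSeries.coeff (R := F) n (psSubst P (θ f)))))
      = ∑ k ∈ range (n + 1), ∑ b ∈ range (i + 1), ∑ c ∈ range (i + 1),
          (((b + k).choose b : F) * (PowerSeries.coeff (R := F) (b + k) (θ f)
            * (PowerSeries.coeff (R := F) c (θ (PowerSeries.coeff (R := F) n (P ^ k)))
              * PowerSeries.coeff (R := F) i (P ^ (b + c))))) := by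
    rw [coeff_psSubst, coeff_psSubst]
    simp only [hθsum, map_sum, hmul, PowerSeries.coeff_mul, Finset.sum_mul]
    rw [Finset.sum_comm]
    refine Finset.sum_congr rfl fun k _ => ?_
    calc
      ∑ a ∈ range (i + 1), ∑ p ∈ antidiagonal a,
          PowerSeries.coeff (R := F) p.1 (θ (PowerSeries.coeff (R := F) k (θ f)))
            * PowerSeries.coeff (R := F) p.2 (θ (PowerSeries.coeff (R := F) n (P ^ k)))
            * PowerSeries.coeff (R := F) i (P ^ a)
        = ∑ a ∈ range (i + 1), ∑ p ∈ antidiagonal a,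
          PowerSeries.coeff (R := F) p.1 (θ (PowerSeries.coeff (R := F) k (θ f)))
            * PowerSeries.coeff (R := F) p.2 (θ (PowerSeries.coeff (R := F) n (P ^ k)))
            * PowerSeries.coeff (R := F) i (P ^ (p.1 + p.2)) := by
          refine Finset.sum_congr rfl fun a _ => Finset.sum_congr rfl fun p hp => ?_
          rw [HasAntidiagonal.mem_antidiagonal] at hp
          rw [hp]
      _ = ∑ b ∈ range (i + 1), ∑ c ∈ range (i + 1),
          PowerSeries.coeff (R := F) b (θ (PowerSeries.coeff (R := F) k (θ f)))
            * PowerSeries.coeff (R := F) c (θ (PowerSeries.coeff (R := F) n (P ^ k)))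
            * PowerSeries.coeff (R := F) i (P ^ (b + c)) := by
          refine sum_antidiag_box i (fun b c =>
            PowerSeries.coeff (R := F) b (θ (PowerSeries.coeff (R := F) k (θ f)))
              * PowerSeries.coeff (R := F) c (θ (PowerSeries.coeff (R := F) n (P ^ k)))
              * PowerSeries.coeff (R := F) i (P ^ (b + c))) fun b c hbc => ?_
          show PowerSeries.coeff (R := F) b (θ (PowerSeries.coeff (R := F) k (θ f)))
              * PowerSeries.coeff (R := F) c (θ (PowerSeries.coeff (R := F) n (P ^ k)))
              * PowerSeries.coeff (R := F) i (P ^ (b + c)) = 0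
          rw [coeff_pow_zero hP hbc, mul_zero]
      _ = ∑ b ∈ range (i + 1), ∑ c ∈ range (i + 1),
          (((b + k).choose b : F) * (PowerSeries.coeff (R := F) (b + k) (θ f)
            * (PowerSeries.coeff (R := F) c (θ (PowerSeries.coeff (R := F) n (P ^ k)))
              * PowerSeries.coeff (R := F) i (P ^ (b + c))))) := by
          refine Finset.sum_congr rfl fun b _ => Finset.sum_congr rfl fun c _ => ?_
          rw [hiter b k f, nsmul_eq_mul]
          ring

  have key : ∀ b k : ℕ,
      (∑ q ∈ antidiagonal i, PowerSeries.coeff (R := F) q.1 (P ^ b)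
        * ∑ c ∈ range (q.2 + 1), PowerSeries.coeff (R := F) c (θ (PowerSeries.coeff (R := F) n (P ^ k)))
          * PowerSeries.coeff (R := F) q.2 (P ^ c))
        = ∑ c ∈ range (i + 1), PowerSeries.coeff (R := F) c (θ (PowerSeries.coeff (R := F) n (P ^ k)))
            * PowerSeries.coeff (R := F) i (P ^ (b + c)) := by
    intro b k
    calc
      (∑ q ∈ antidiagonal i, PowerSeries.coeff (R := F) q.1 (P ^ b)
        * ∑ c ∈ range (q.2 + 1), PowerSeries.coeff (R := F) c (θ (PowerSeries.coeff (R := F) n (P ^ k)))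
          * PowerSeries.coeff (R := F) q.2 (P ^ c))
          = ∑ q ∈ antidiagonal i, PowerSeries.coeff (R := F) q.1 (P ^ b)
            * ∑ c ∈ range (i + 1), PowerSeries.coeff (R := F) c (θ (PowerSeries.coeff (R := F) n (P ^ k)))
              * PowerSeries.coeff (R := F) q.2 (P ^ c) := by
            refine Finset.sum_congr rfl fun q hq => ?_
            rw [HasAntidiagonal.mem_antidiagonal] at hq
            congr 1
            refine Finset.sum_subset (Finset.range_subset_range.mpr (by omega)) fun c _ hc => ?_
            rw [mem_range, not_lt] at hc
            rw [coeff_pow_zero hP (show q.2 < c by omega), mul_zero]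
        _ = ∑ q ∈ antidiagonal i, ∑ c ∈ range (i + 1), PowerSeries.coeff (R := F) q.1 (P ^ b)
            * (PowerSeries.coeff (R := F) c (θ (PowerSeries.coeff (R := F) n (P ^ k)))
              * PowerSeries.coeff (R := F) q.2 (P ^ c)) := by
            simp only [Finset.mul_sum]
        _ = ∑ c ∈ range (i + 1), ∑ q ∈ antidiagonal i, PowerSeries.coeff (R := F) q.1 (P ^ b)
            * (PowerSeries.coeff (R := F) c (θ (PowerSeries.coeff (R := F) n (P ^ k)))
              * PowerSeries.coeff (R := F) q.2 (P ^ c)) := Finset.sum_comm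
        _ = ∑ c ∈ range (i + 1), PowerSeries.coeff (R := F) c (θ (PowerSeries.coeff (R := F) n (P ^ k)))
            * ∑ q ∈ antidiagonal i, PowerSeries.coeff (R := F) q.1 (P ^ b)
              * PowerSeries.coeff (R := F) q.2 (P ^ c) := by
            refine Finset.sum_congr rfl fun c _ => ?_
            rw [Finset.mul_sum]
            exact Finset.sum_congr rfl fun q _ => by ring
        _ = ∑ c ∈ range (i + 1), PowerSeries.coeff (R := F) c (θ (PowerSeries.coeff (R := F) n (P ^ k)))
            * PowerSeries.coeff (R := F) i (P ^ (b + c)) := by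
            refine Finset.sum_congr rfl fun c _ => ?_
            rw [pow_add, PowerSeries.coeff_mul]
  have hGb : ∀ u v : ℕ, i < u →
      (((u + v).choose u : F) * (PowerSeries.coeff (R := F) (u + v) (θ f)
        * ∑ q ∈ antidiagonal i, PowerSeries.coeff (R := F) q.1 (P ^ u)
          * ∑ c ∈ range (q.2 + 1), PowerSeries.coeff (R := F) c (θ (PowerSeries.coeff (R := F) n (P ^ v)))
            * PowerSeries.coeff (R := F) q.2 (P ^ c))) = 0 := by
    intro u v hu
    refine mul_eq_zero_of_right _ (mul_eq_zero_of_right _ (Finset.sum_eq_zero fun q hq => ?_))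
    rw [HasAntidiagonal.mem_antidiagonal] at hq
    rw [coeff_pow_zero hP (show q.1 < u by omega), zero_mul]
  have hGk : ∀ u v : ℕ, n < v →
      (((u + v).choose u : F) * (PowerSeries.coeff (R := F) (u + v) (θ f)
        * ∑ q ∈ antidiagonal i, PowerSeries.coeff (R := F) q.1 (P ^ u)
          * ∑ c ∈ range (q.2 + 1), PowerSeries.coeff (R := F) c (θ (PowerSeries.coeff (R := F) n (P ^ v)))
            * PowerSeries.coeff (R := F) q.2 (P ^ c))) = 0 := by
    intro u v hv
    refine mul_eq_zero_of_right _ (mul_eq_zero_of_right _ (Finset.sum_eq_zero fun q _ => ?_))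
    rw [coeff_pow_zero hP hv, hz]
    simp
  have hA : ∀ m : ℕ,
      PowerSeries.coeff (R := F) i (PowerSeries.coeff (R := PowerSeries F) n
        ((PowerSeries.C (R := PowerSeries F) P + PowerSeries.map τ P) ^ m))
        = ∑ p ∈ antidiagonal m, (m.choose p.1 : F)
            * ∑ q ∈ antidiagonal i, PowerSeries.coeff (R := F) q.1 (P ^ p.1)
              * ∑ c ∈ range (q.2 + 1), PowerSeries.coeff (R := F) c (θ (PowerSeries.coeff (R := F) n (P ^ p.2)))
                * PowerSeries.coeff (R := F) q.2 (P ^ c) := by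
    intro m
    rw [(Commute.all _ _).add_pow']
    simp only [← map_pow]
    simp only [map_sum, map_nsmul, PowerSeries.coeff_C_mul, PowerSeries.coeff_map]
    simp only [PowerSeries.coeff_mul, hτ, coeff_psSubst, nsmul_eq_mul]
  have hR : PowerSeries.coeff (R := F) i (PowerSeries.coeff (R := PowerSeries F) n
      (psSubst2 (PowerSeries.C (R := PowerSeries F) P + PowerSeries.map τ P) (θ f)))
      = ∑ k ∈ range (n + 1), ∑ b ∈ range (i + 1), ∑ c ∈ range (i + 1),
          (((b + k).choose b : F) * (PowerSeries.coeff (R := F) (b + k) (θ f)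
            * (PowerSeries.coeff (R := F) c (θ (PowerSeries.coeff (R := F) n (P ^ k)))
              * PowerSeries.coeff (R := F) i (P ^ (b + c))))) := by
    rw [coeff_psSubst2]
    simp only [hA]
    calc
      ∑ m ∈ range (i + n + 1), PowerSeries.coeff (R := F) m (θ f)
          * ∑ p ∈ antidiagonal m, (m.choose p.1 : F)
            * ∑ q ∈ antidiagonal i, PowerSeries.coeff (R := F) q.1 (P ^ p.1)
              * ∑ c ∈ range (q.2 + 1), PowerSeries.coeff (R := F) c (θ (PowerSeries.coeff (R := F) n (P ^ p.2)))
                * PowerSeries.coeff (R := F) q.2 (P ^ c)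
          = ∑ m ∈ range (i + n + 1), ∑ p ∈ antidiagonal m,
            (((p.1 + p.2).choose p.1 : F) * (PowerSeries.coeff (R := F) (p.1 + p.2) (θ f)
              * ∑ q ∈ antidiagonal i, PowerSeries.coeff (R := F) q.1 (P ^ p.1)
                * ∑ c ∈ range (q.2 + 1), PowerSeries.coeff (R := F) c (θ (PowerSeries.coeff (R := F) n (P ^ p.2)))
                  * PowerSeries.coeff (R := F) q.2 (P ^ c))) := by
            refine Finset.sum_congr rfl fun m _ => ?_
            rw [Finset.mul_sum]
            refine Finset.sum_congr rfl fun p hp => ?_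
            rw [HasAntidiagonal.mem_antidiagonal] at hp
            rw [← hp]
            ring
        _ = ∑ b ∈ range (i + n + 1), ∑ k ∈ range (i + n + 1),
            (((b + k).choose b : F) * (PowerSeries.coeff (R := F) (b + k) (θ f)
              * ∑ q ∈ antidiagonal i, PowerSeries.coeff (R := F) q.1 (P ^ b)
                * ∑ c ∈ range (q.2 + 1), PowerSeries.coeff (R := F) c (θ (PowerSeries.coeff (R := F) n (P ^ k)))
                  * PowerSeries.coeff (R := F) q.2 (P ^ c))) := by
            refine sum_antidiag_box (i + n) (fun b k =>
              (((b + k).choose b : F) * (PowerSeries.coeff (R := F) (b + k) (θ f)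
                * ∑ q ∈ antidiagonal i, PowerSeries.coeff (R := F) q.1 (P ^ b)
                  * ∑ c ∈ range (q.2 + 1), PowerSeries.coeff (R := F) c (θ (PowerSeries.coeff (R := F) n (P ^ k)))
                    * PowerSeries.coeff (R := F) q.2 (P ^ c)))) fun u v huv => ?_
            by_cases hu : i < u
            · exact hGb u v hu
            · exact hGk u v (by omega)
        _ = ∑ b ∈ range (i + 1), ∑ k ∈ range (i + n + 1),
            (((b + k).choose b : F) * (PowerSeries.coeff (R := F) (b + k) (θ f)
              * ∑ q ∈ antidiagonal i, PowerSeries.coeff (R := F) q.1 (P ^ b)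
                * ∑ c ∈ range (q.2 + 1), PowerSeries.coeff (R := F) c (θ (PowerSeries.coeff (R := F) n (P ^ k)))
                  * PowerSeries.coeff (R := F) q.2 (P ^ c))) := by
            refine (Finset.sum_subset (Finset.range_subset_range.mpr (by omega)) fun b _ hb => ?_).symm
            rw [mem_range, not_lt] at hb
            exact Finset.sum_eq_zero fun k _ => hGb b k (by omega)
        _ = ∑ b ∈ range (i + 1), ∑ k ∈ range (n + 1),
            (((b + k).choose b : F) * (PowerSeries.coeff (R := F) (b + k) (θ f)
              * ∑ q ∈ antidiagonal i, PowerSeries.coeff (R := F) q.1 (P ^ b)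
                * ∑ c ∈ range (q.2 + 1), PowerSeries.coeff (R := F) c (θ (PowerSeries.coeff (R := F) n (P ^ k)))
                  * PowerSeries.coeff (R := F) q.2 (P ^ c))) := by
            refine Finset.sum_congr rfl fun b _ => ?_
            refine (Finset.sum_subset (Finset.range_subset_range.mpr (by omega)) fun k _ hk => ?_).symm
            rw [mem_range, not_lt] at hk
            exact hGk b k (by omega)
        _ = ∑ k ∈ range (n + 1), ∑ b ∈ range (i + 1),
            (((b + k).choose b : F) * (PowerSeries.coeff (R := F) (b + k) (θ f)
              * ∑ q ∈ antidiagonal i, PowerSeries.coeff (R := F) q.1 (P ^ b)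
                * ∑ c ∈ range (q.2 + 1), PowerSeries.coeff (R := F) c (θ (PowerSeries.coeff (R := F) n (P ^ k)))
                  * PowerSeries.coeff (R := F) q.2 (P ^ c))) := Finset.sum_comm
        _ = ∑ k ∈ range (n + 1), ∑ b ∈ range (i + 1), ∑ c ∈ range (i + 1),
            (((b + k).choose b : F) * (PowerSeries.coeff (R := F) (b + k) (θ f)
              * (PowerSeries.coeff (R := F) c (θ (PowerSeries.coeff (R := F) n (P ^ k)))
                * PowerSeries.coeff (R := F) i (P ^ (b + c))))) := by
            refine Finset.sum_congr rfl fun k _ => Finset.sum_congr rfl fun b _ => ?_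
            rw [key b k, Finset.mul_sum, Finset.mul_sum]
  rw [hR]
  rw [hL]
end
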